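/- For every covariant event E ∈ R, there exists an event E′ ∈ R(Ŝ) (the σ-algebra generated by the principal stem-sets) such that the symmetric difference E △ E′ is contained in B_∞^c. -/

import Mathlib

open MeasurableSpace MeasureTheory Set

/-- An (infinite) causal set: an irreflexive, transitive relation on ℕ
satisfying the natural-labeling condition `x ≺ y → x < y`.  The type of all
such causets plays the role of Ω. -/
structure Causet where
  rel : ℕ → ℕ → Prop
  irrefl : ∀ x, ¬ rel x x
  trans : ∀ x y z, rel x y → rel y z → rel x z
  lt_of_rel : ∀ x y, rel x y → x < y

/-- A finite causet on ground-set `{0, …, n-1}` with natural labeling. -/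
structure FinCauset (n : ℕ) where
  rel : ℕ → ℕ → Prop
  bounded : ∀ x y, rel x y → x < n ∧ y < n
  irrefl : ∀ x, ¬ rel x x
  trans : ∀ x y z, rel x y → rel y z → rel x z
  lt_of_rel : ∀ x y, rel x y → x < y

/-- The cylinder set of a finite causet `C` on `{0,…,n-1}`: all causets whose
restriction to `{0,…,n-1}` equals `C`. -/
def cyl {n : ℕ} (C : FinCauset n) : Set Causet :=
  { D | ∀ x y, x < n → y < n → (D.rel x y ↔ C.rel x y) }

/-- The σ-algebra 𝔐 generated by all cylinder sets. -/
def cylAlgebra : MeasurableSpace Causet :=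
  .generateFrom { E | ∃ n, 0 < n ∧ ∃ C : FinCauset n, E = cyl C }

/-- Order isomorphism between two (infinite) causets. -/
def Iso (C D : Causet) : Prop :=
  ∃ f : ℕ ≃ ℕ, ∀ x y, C.rel x y ↔ D.rel (f x) (f y)

/-- A set of causets is covariant if it is closed under order isomorphism. -/
def CovariantEvent (E : Set Causet) : Prop :=
  ∀ C D : Causet, Iso C D → C ∈ E → D ∈ E

/-- Membership in the σ-algebra R of covariant events: measurable w.r.t. 𝔐
and closed under order isomorphism. -/
def MemR (E : Set Causet) : Prop :=
  MeasurableSet[cylAlgebra] E ∧ CovariantEvent E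

/-- A stem of a causet: a finite down-set. -/
def IsStem (D : Causet) (A : Set ℕ) : Prop :=
  A.Finite ∧ ∀ x y, y ∈ A → D.rel x y → x ∈ A

/-- The stem-set of (the order of) the finite causet `C`: all causets
containing a stem order-isomorphic to `C`. -/
def stemSet {n : ℕ} (C : FinCauset n) : Set Causet :=
  { D | ∃ A : Set ℕ, IsStem D A ∧
      ∃ f : {x : ℕ // x < n} ≃ A,
        ∀ x y : {x : ℕ // x < n}, C.rel x.1 y.1 ↔ D.rel (f x).1 (f y).1 }

/-- The collection S of all stem-sets. -/
def stemSets : Set (Set Causet) :=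
  { E | ∃ n, 0 < n ∧ ∃ C : FinCauset n, E = stemSet C }

/-- The σ-algebra R(S) generated by the stem-sets. -/
def stemAlgebra : MeasurableSpace Causet := .generateFrom stemSets

/-- A rogue: a causet `U` for which there is a non-isomorphic causet `V`
belonging to exactly the same stem-sets. -/
def IsRogue (U : Causet) : Prop :=
  ∃ V : Causet, ¬ Iso U V ∧
    ∀ (n : ℕ) (C : FinCauset n), 0 < n → (V ∈ stemSet C ↔ U ∈ stemSet C)

/-- Θ: the set of rogues. -/
def Theta : Set Causet := { U | IsRogue U }

/-- `A` is the past of a break of `D`: `(A, Aᶜ)` is a partition into nonempty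
parts with every element of `A` below every element of `Aᶜ`. -/
def IsBreakPast (D : Causet) (A : Set ℕ) : Prop :=
  A.Nonempty ∧ Aᶜ.Nonempty ∧ ∀ a ∈ A, ∀ b ∈ Aᶜ, D.rel a b

/-- B_∞: the set of causets with infinitely many breaks. -/
def Binf : Set Causet := { D | { A : Set ℕ | IsBreakPast D A }.Infinite }

/-- `x` is a maximal element of the restriction of the finite causet `C`
to the elements `< k`. -/
def FMaximalBelow {n : ℕ} (C : FinCauset n) (k x : ℕ) : Prop :=
  x < k ∧ ∀ y, y < k → ¬ C.rel x y

/-- A principal finite causet: it has a unique maximal element. -/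
def Principal {n : ℕ} (C : FinCauset n) : Prop :=
  ∃! x, FMaximalBelow C n x

/-- 𝔐_b: the σ-algebra generated by the principal cylinder sets. -/
def principalCylAlgebra : MeasurableSpace Causet :=
  .generateFrom { E | ∃ n, ∃ C : FinCauset n, Principal C ∧ E = cyl C }

/-- Membership in R_b: covariant events containing all or none of the
causets with finitely many breaks. -/
def MemRb (E : Set Causet) : Prop :=
  MemR E ∧ (Binfᶜ ⊆ E ∨ Binfᶜ ⊆ Eᶜ)

/-- `x` is a maximal element of the restriction of the causet `D` to `{0,…,n}`. -/
def RMaximal (D : Causet) (n x : ℕ) : Prop :=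
  x ≤ n ∧ ∀ y, y ≤ n → ¬ D.rel x y

/-- 𝔉: causets all but finitely many of whose initial-segment restrictions
have at least two maximal elements. -/
def Ffin : Set Causet :=
  { D | ∃ m : ℕ, ∀ n, m < n →
      ∃ x y, x ≠ y ∧ RMaximal D n x ∧ RMaximal D n y }

/-- The restriction of the m-causet `D` to `{0,…,n-1}` equals the n-causet `C`. -/
def RestrEq {m n : ℕ} (D : FinCauset m) (C : FinCauset n) : Prop :=
  ∀ x y, x < n → y < n → (D.rel x y ↔ C.rel x y)

/-- Γ_{C}: the causets containing `C` as a stem but containing no principal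
causet of larger cardinality as a stem (i.e. `cyl C` minus the cylinder sets
of the principal causets extending `C`). -/
def Gamma {n : ℕ} (C : FinCauset n) : Set Causet :=
  cyl C \ { X | ∃ m, n < m ∧ ∃ D : FinCauset m, Principal D ∧ RestrEq D C ∧ X ∈ cyl D }

/-- Ŝ: the collection of principal stem-sets. -/
def principalStemSets : Set (Set Causet) :=
  { E | ∃ n, ∃ C : FinCauset n, Principal C ∧ E = stemSet C }

/-- R(Ŝ): the σ-algebra generated by the principal stem-sets. -/
def principalStemAlgebra : MeasurableSpace Causet := .generateFrom principalStemSets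

/-- `x` is a post of `D`: every other element is related to `x`. -/
def IsPost (D : Causet) (x : ℕ) : Prop :=
  ∀ y, y ≠ x → D.rel y x ∨ D.rel x y

/-- P_∞: the set of causets with infinitely many posts. -/
def Pinf : Set Causet := { D | { x | IsPost D x }.Infinite }

/-- A doubly principal finite causet: both it and its restriction to
`{0,…,n-2}` have a unique maximal element. -/
def DoublyPrincipal {n : ℕ} (C : FinCauset n) : Prop :=
  Principal C ∧ ∃! x, FMaximalBelow C (n - 1) x

/-- 𝔐_p: the σ-algebra generated by the doubly principal cylinder sets. -/
def doublyPrincipalCylAlgebra : MeasurableSpace Causet :=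
  .generateFrom { E | ∃ n, ∃ C : FinCauset n, DoublyPrincipal C ∧ E = cyl C }

/-- The σ-algebra generated by the doubly principal stem-sets. -/
def doublyPrincipalStemAlgebra : MeasurableSpace Causet :=
  .generateFrom { E | ∃ n, ∃ C : FinCauset n, DoublyPrincipal C ∧ E = stemSet C }

/-!
Among causets with infinitely many breaks, a causet is determined up to isomorphism by its
principal stems. If `m` is a break of `Y`, the segment `{0, …, m}` is a principal stem of `Y`,
so `X` contains a copy of it, and that copy contains `{0, …, k - 1}` for every break `k ≤ m`
of `X`. Since `{0, …, k - 1}` precedes the rest of the copy in `X`, its preimage precedes the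
rest of `{0, …, m}` in `Y`, so by the natural labeling the preimage is `{0, …, k - 1}` itself.
Thus every break of `X` is a break of `Y`, and `X` and `Y` have isomorphic blocks between
consecutive breaks of `X`; these isomorphisms glue to an isomorphism of `X` and `Y`.

Hence the map sending a causet to the family of principal stem-sets containing it, which is
measurable for R(Ŝ), separates the covariant sets `E ∩ B_∞` and `B_∞ \ E`. Encoding causets as
points of `ℕ × ℕ → Bool` makes 𝔐 standard Borel, so the images of these two sets are disjoint
analytic sets, and a Borel set separating them (Lusin) pulls back to the required `E'`.
-/

lemma Finset.eq_range_card_of_isLowerSet {S : Finset ℕ} (h : IsLowerSet (S : Set ℕ)) :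
    S = Finset.range S.card := by
  obtain hS | ⟨j, hj⟩ := h.eq_univ_or_Iio
  · exact absurd (hS ▸ S.finite_toSet) Set.infinite_univ
  · have : S = Finset.range j := by rw [← Finset.coe_inj, hj, Finset.coe_range]
    rw [this, Finset.card_range]

namespace Causet

lemma ext_rel {X Y : Causet} (h : ∀ x y, X.rel x y ↔ Y.rel x y) : X = Y := by
  cases X; cases Y
  congr
  ext x y
  exact h x y

def IsBreakLevel (X : Causet) (k : ℕ) : Prop :=
  0 < k ∧ ∀ a b, a < k → k ≤ b → X.rel a b

lemma isBreakPast_iff {X : Causet} {A : Set ℕ} :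
    IsBreakPast X A ↔ ∃ k, X.IsBreakLevel k ∧ A = Iio k := by
  constructor
  · rintro ⟨⟨a, ha⟩, hAc, hrel⟩
    have hlow : IsLowerSet A := fun u v hvu hu => by
      by_contra hv
      exact absurd (X.lt_of_rel u v (hrel u hu v hv)) (not_lt.2 hvu)
    obtain hA | ⟨k, rfl⟩ := hlow.eq_univ_or_Iio
    · simp [hA] at hAc
    · exact ⟨k, ⟨pos_of_gt ha, fun a b ha hb => hrel a ha b (not_lt.2 hb)⟩, rfl⟩
  · rintro ⟨k, ⟨hk, hrel⟩, rfl⟩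
    exact ⟨⟨0, hk⟩, ⟨k, lt_irrefl k⟩, fun a ha b hb => hrel a b ha (not_lt.1 hb)⟩

lemma mem_Binf_iff {X : Causet} : X ∈ Binf ↔ {k | X.IsBreakLevel k}.Infinite := by
  have : {A | IsBreakPast X A} = Iio '' {k | X.IsBreakLevel k} := by
    ext A
    simp only [mem_ofPred_eq, isBreakPast_iff, mem_image, eq_comm]
  rw [Binf, mem_ofPred_eq, this, Set.infinite_image_iff Set.Iio_injective.injOn]

def restrict (X : Causet) (n : ℕ) : FinCauset n where
  rel x y := x < n ∧ y < n ∧ X.rel x y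
  bounded _ _ h := ⟨h.1, h.2.1⟩
  irrefl x h := X.irrefl x h.2.2
  trans _ _ _ h₁ h₂ := ⟨h₁.1, h₂.2.1, X.trans _ _ _ h₁.2.2 h₂.2.2⟩
  lt_of_rel x y h := X.lt_of_rel x y h.2.2

lemma mem_cyl_restrict (X : Causet) (n : ℕ) : X ∈ cyl (X.restrict n) :=
  fun _ _ hx hy => ⟨fun h => ⟨hx, hy, h⟩, fun h => h.2.2⟩

lemma mem_stemSet_restrict (X : Causet) (n : ℕ) : X ∈ stemSet (X.restrict n) :=
  ⟨Iio n, ⟨finite_Iio n, fun x y hy hxy => (X.lt_of_rel x y hxy).trans hy⟩, Equiv.refl _,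
    fun x y => ⟨fun h => h.2.2, fun h => ⟨x.2, y.2, h⟩⟩⟩

lemma principal_restrict_succ {X : Causet} {m : ℕ} (hm : ∀ a < m, X.rel a m) :
    Principal (X.restrict (m + 1)) := by
  refine ⟨m, ⟨m.lt_succ_self, fun y _ h => ?_⟩, fun x ⟨hx, hmax⟩ => ?_⟩
  · exact absurd (X.lt_of_rel m y h.2.2) (by omega)
  · by_contra hne
    exact hmax m m.lt_succ_self ⟨hx, m.lt_succ_self, hm x (by omega)⟩

lemma lt_iff_lt_of_isBreakLevel {X Y : Causet} {A : Set ℕ} {n k : ℕ} (hk : X.IsBreakLevel k)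
    (hkA : Iio k ⊆ A) (e : A ≃ Iio n) (he : ∀ a b : A, X.rel a b ↔ Y.rel (e a) (e b)) (a : A) :
    (a : ℕ) < k ↔ (e a : ℕ) < k := by
  classical
  set S : Finset ℕ := Finset.univ.image fun b : Iio k => (e ⟨b, hkA b.2⟩ : ℕ)
  have hcard : S.card = k := by
    rw [Finset.card_image_of_injective, Finset.card_univ, Fintype.card_Iio, Nat.card_Iio]
    intro b c hbc
    exact Subtype.ext (by simpa using e.injective (Subtype.ext hbc))
  have hlow : IsLowerSet (S : Set ℕ) := by
    intro u v hvu hu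
    obtain ⟨b, -, rfl⟩ := Finset.mem_image.1 hu
    set c := e.symm ⟨v, hvu.trans_lt (e _).2⟩
    by_cases hc : (c : ℕ) < k
    · exact Finset.mem_image.2 ⟨⟨c, hc⟩, Finset.mem_univ _, by simp [c]⟩
    · have := (he ⟨b, hkA b.2⟩ c).1 (hk.2 b c b.2 (not_lt.1 hc))
      simp only [c, Equiv.apply_symm_apply] at this
      exact absurd (Y.lt_of_rel _ _ this) (not_lt.2 hvu)
  have hS : ∀ y, y ∈ S ↔ y < k := fun y => by
    rw [Finset.eq_range_card_of_isLowerSet hlow, hcard, Finset.mem_range]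
  constructor
  · intro ha
    exact (hS _).1 (Finset.mem_image.2 ⟨⟨a, ha⟩, Finset.mem_univ _, rfl⟩)
  · intro ha
    obtain ⟨b, -, hb⟩ := Finset.mem_image.1 ((hS _).2 ha)
    rw [← e.injective (Subtype.ext hb)]
    exact b.2

lemma exists_iso_Iio_of_principal_stems {X Y : Causet}
    (H : ∀ n (C : FinCauset n), Principal C → Y ∈ stemSet C → X ∈ stemSet C)
    {k m : ℕ} (hk : X.IsBreakLevel k) (hm : Y.IsBreakLevel m) (hkm : k ≤ m) :
    (∀ a b, a < k → k ≤ b → b ≤ m → Y.rel a b) ∧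
      ∃ ρ : Iio k ≃ Iio k, ∀ a b : Iio k, X.rel a b ↔ Y.rel (ρ a) (ρ b) := by
  obtain ⟨A, ⟨-, hAdown⟩, e, he⟩ :=
    H _ _ (principal_restrict_succ fun a ha => hm.2 a m ha le_rfl) (Y.mem_stemSet_restrict (m + 1))
  change Iio (m + 1) ≃ A at e
  replace he : ∀ x y : Iio (m + 1), Y.rel x y ↔ X.rel (e x) (e y) := fun x y =>
    Iff.trans ⟨fun h => ⟨x.2, y.2, h⟩, fun h => h.2.2⟩ (he x y)
  set s : ℕ := (e ⟨m, m.lt_succ_self⟩).1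
  have hle_s : ∀ x : Iio (m + 1), (e x).1 ≤ s := by
    rintro ⟨x, hx⟩
    rcases (Nat.lt_succ_iff.1 hx).lt_or_eq with hx | rfl
    · exact (X.lt_of_rel _ _ ((he ⟨x, _⟩ ⟨m, _⟩).1 (hm.2 x m hx le_rfl))).le
    · exact le_rfl
  -- `A` has `m + 1` elements, all at most `s`
  have hms : m ≤ s := by
    have := Fintype.card_le_of_injective (fun x : Iio (m + 1) => (⟨e x, hle_s x⟩ : Iic s))
      fun x y h => e.injective (Subtype.ext (Subtype.mk.inj h))
    simpa using this
  have hkA : Iio k ⊆ A := fun a ha => by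
    rcases eq_or_ne a s with rfl | has
    · exact (e _).2
    · exact hAdown a s (e _).2 (hk.2 a s ha (hkm.trans hms))
  have hsymm : ∀ a b : A, X.rel a b ↔ Y.rel (e.symm a) (e.symm b) := fun a b => by
    simpa using (he (e.symm a) (e.symm b)).symm
  have hlt := lt_iff_lt_of_isBreakLevel hk hkA e.symm hsymm
  refine ⟨fun a b ha hb hbm =>
    (he ⟨a, mem_Iio.2 (by omega)⟩ ⟨b, mem_Iio.2 (by omega)⟩).2 (hk.2 _ _ ?_ ?_), ?_⟩
  · simpa using (hlt (e ⟨a, _⟩)).2 (by simpa using ha)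
  · by_contra h
    have := (hlt (e ⟨b, _⟩)).1 (not_le.1 h)
    simp only [Equiv.symm_apply_apply] at this
    omega
  · refine ⟨(Equiv.subtypeSubtypeEquivSubtype fun h => hkA h).symm.trans
      ((e.symm.subtypeEquiv hlt).trans (Equiv.subtypeSubtypeEquivSubtype fun {x} h => ?_)),
      fun a b => hsymm ⟨a, hkA a.2⟩ ⟨b, hkA b.2⟩⟩
    exact mem_Iio.2 (by have : x < k := h; omega)

noncomputable def nextBreak (X : Causet) (a : ℕ) : ℕ := sInf {j | X.IsBreakLevel j ∧ a < j}

section nextBreak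

variable {X : Causet} (hX : {k | X.IsBreakLevel k}.Infinite)
include hX

lemma isBreakLevel_nextBreak (a : ℕ) : X.IsBreakLevel (X.nextBreak a) ∧ a < X.nextBreak a :=
  Nat.sInf_mem (hX.exists_gt a)

lemma lt_iff_nextBreak_le {a j : ℕ} (hj : X.IsBreakLevel j) : a < j ↔ X.nextBreak a ≤ j :=
  ⟨fun h => Nat.sInf_le ⟨hj, h⟩, fun h => (isBreakLevel_nextBreak hX a).2.trans_le h⟩

lemma lt_nextBreak_le_of_nextBreak_lt {a b : ℕ} (h : X.nextBreak a < X.nextBreak b) :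
    a < X.nextBreak a ∧ X.nextBreak a ≤ b := by
  refine ⟨(isBreakLevel_nextBreak hX a).2, not_lt.1 fun hb => ?_⟩
  exact (lt_iff_nextBreak_le hX (isBreakLevel_nextBreak hX a).1).1 hb |>.not_gt h

end nextBreak

lemma nextBreak_congr {X : Causet} {a b : ℕ} (h : ∀ j, X.IsBreakLevel j → (a < j ↔ b < j)) :
    X.nextBreak a = X.nextBreak b := by
  unfold nextBreak
  congr 1
  ext j
  exact and_congr_right (h j)

lemma nextBreak_apply_eq {X Y : Causet} {k : ℕ} (ρ : Iio k ≃ Iio k)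
    (hρ : ∀ a b : Iio k, X.rel a b ↔ Y.rel (ρ a) (ρ b)) (a : Iio k) :
    X.nextBreak (ρ a) = X.nextBreak a := by
  refine nextBreak_congr fun j hj => ?_
  rcases le_or_gt j k with hjk | hkj
  · exact (lt_iff_lt_of_isBreakLevel hj (Iio_subset_Iio hjk) ρ hρ a).symm
  · exact iff_of_true ((ρ a).2.trans hkj) (a.2.trans hkj)

section glueBlocks

variable {X : Causet} (ρ : ∀ k, X.IsBreakLevel k → Iio k ≃ Iio k)

open Classical in
noncomputable def glueBlocks (a : ℕ) : ℕ :=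
  if h : X.IsBreakLevel (X.nextBreak a) ∧ a < X.nextBreak a then ρ _ h.1 ⟨a, h.2⟩ else a

lemma glueBlocks_eq {a k : ℕ} (hk : X.IsBreakLevel k) (ha : a < k) (h : X.nextBreak a = k) :
    glueBlocks ρ a = ρ k hk ⟨a, ha⟩ := by
  subst h
  exact dif_pos ⟨hk, ha⟩

variable {Y : Causet} (hX : {k | X.IsBreakLevel k}.Infinite)
  (hρ : ∀ k hk (a b : Iio k), X.rel a b ↔ Y.rel (ρ k hk a) (ρ k hk b))
include hX hρ

lemma nextBreak_glueBlocks (a : ℕ) : X.nextBreak (glueBlocks ρ a) = X.nextBreak a := by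
  obtain ⟨hk, ha⟩ := isBreakLevel_nextBreak hX a
  rw [glueBlocks_eq ρ hk ha rfl]
  exact nextBreak_apply_eq _ (hρ _ hk) ⟨a, ha⟩

lemma bijective_glueBlocks : Function.Bijective (glueBlocks ρ) := by
  refine ⟨fun a b hab => ?_, fun y => ?_⟩
  · obtain ⟨hk, ha⟩ := isBreakLevel_nextBreak hX a
    have hnext : X.nextBreak b = X.nextBreak a := by
      rw [← nextBreak_glueBlocks ρ hX hρ b, ← hab, nextBreak_glueBlocks ρ hX hρ]
    have hb := hnext ▸ (isBreakLevel_nextBreak hX b).2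
    rw [glueBlocks_eq ρ hk ha rfl, glueBlocks_eq ρ hk hb hnext] at hab
    exact congrArg Subtype.val ((ρ _ hk).injective (Subtype.ext hab))
  · obtain ⟨hk, hy⟩ := isBreakLevel_nextBreak hX y
    set x := (ρ _ hk).symm ⟨y, hy⟩
    have hnext : X.nextBreak x = X.nextBreak y := by
      simpa [x] using (nextBreak_apply_eq _ (hρ _ hk) x).symm
    exact ⟨x, by rw [glueBlocks_eq ρ hk x.2 hnext, Equiv.apply_symm_apply]⟩

lemma glueBlocks_rel_iff (hXY : ∀ k, X.IsBreakLevel k → Y.IsBreakLevel k) (a b : ℕ) :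
    X.rel a b ↔ Y.rel (glueBlocks ρ a) (glueBlocks ρ b) := by
  -- across blocks both relations hold forwards, by the breaks separating the blocks
  have rel_of_lt : ∀ a b, X.nextBreak a < X.nextBreak b →
      X.rel a b ∧ Y.rel (glueBlocks ρ a) (glueBlocks ρ b) := by
    intro a b h
    obtain ⟨ha, hab⟩ := lt_nextBreak_le_of_nextBreak_lt hX h
    rw [← nextBreak_glueBlocks ρ hX hρ a, ← nextBreak_glueBlocks ρ hX hρ b] at h
    obtain ⟨hfa, hfab⟩ := lt_nextBreak_le_of_nextBreak_lt hX h
    exact ⟨(isBreakLevel_nextBreak hX a).1.2 a b ha hab,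
      (hXY _ (isBreakLevel_nextBreak hX _).1).2 _ _ hfa hfab⟩
  rcases lt_trichotomy (X.nextBreak a) (X.nextBreak b) with h | h | h
  · exact iff_of_true (rel_of_lt a b h).1 (rel_of_lt a b h).2
  · obtain ⟨hk, ha⟩ := isBreakLevel_nextBreak hX a
    have hb := h ▸ (isBreakLevel_nextBreak hX b).2
    rw [glueBlocks_eq ρ hk ha rfl, glueBlocks_eq ρ hk hb h.symm]
    exact hρ _ hk ⟨a, ha⟩ ⟨b, hb⟩
  · obtain ⟨hX', hY'⟩ := rel_of_lt b a h
    exact iff_of_false (fun h' => X.irrefl _ (X.trans _ _ _ h' hX'))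
      (fun h' => Y.irrefl _ (Y.trans _ _ _ h' hY'))

end glueBlocks

lemma iso_of_iso_Iio {X Y : Causet} (hX : {k | X.IsBreakLevel k}.Infinite)
    (hXY : ∀ k, X.IsBreakLevel k → Y.IsBreakLevel k)
    (hiso : ∀ k, X.IsBreakLevel k →
      ∃ ρ : Iio k ≃ Iio k, ∀ a b : Iio k, X.rel a b ↔ Y.rel (ρ a) (ρ b)) :
    Iso X Y := by
  choose ρ hρ using hiso
  exact ⟨Equiv.ofBijective _ (bijective_glueBlocks ρ hX hρ), glueBlocks_rel_iff ρ hX hρ hXY⟩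

theorem iso_of_principal_stems {X Y : Causet} (hX : X ∈ Binf) (hY : Y ∈ Binf)
    (H : ∀ n (C : FinCauset n), Principal C → Y ∈ stemSet C → X ∈ stemSet C) : Iso X Y := by
  rw [mem_Binf_iff] at hX hY
  refine iso_of_iso_Iio hX (fun k hk => ⟨hk.1, fun a b ha hb => ?_⟩) fun k hk => ?_
  · obtain ⟨m, hm, hbm⟩ := hY.exists_gt b
    exact (exists_iso_Iio_of_principal_stems H hk hm (hb.trans hbm.le)).1 a b ha hb hbm.le
  · obtain ⟨m, hm, hkm⟩ := hY.exists_gt k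
    exact (exists_iso_Iio_of_principal_stems H hk hm hkm.le).2

end Causet

lemma FinCauset.ext_rel {n : ℕ} {C D : FinCauset n}
    (h : ∀ x y, x < n → y < n → (C.rel x y ↔ D.rel x y)) : C = D := by
  cases C with | mk r hr _ _ _ =>
  cases D with | mk s hs _ _ _ =>
  simp only [FinCauset.mk.injEq]
  funext x y
  by_cases hxy : x < n ∧ y < n
  · exact propext (h x y hxy.1 hxy.2)
  · exact propext (iff_of_false (fun h' => hxy (hr x y h')) fun h' => hxy (hs x y h'))

instance (n : ℕ) : Finite (FinCauset n) :=
  Finite.of_injective (fun C (x y : Fin n) => C.rel x y) fun _ _ h =>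
    FinCauset.ext_rel fun x y hx hy => Iff.of_eq (congrFun (congrFun h ⟨x, hx⟩) ⟨y, hy⟩)

theorem MeasurableEmbedding.measurablySeparable_image {α β γ : Type*} [MeasurableSpace α]
    [MeasurableSpace β] [StandardBorelSpace β] [TopologicalSpace γ] [T2Space γ]
    [SecondCountableTopology γ] [MeasurableSpace γ] [OpensMeasurableSpace γ] {ψ : α → β}
    (hψ : MeasurableEmbedding ψ) {Φ : α → γ} (hΦ : Measurable Φ) {s t : Set α}
    (hs : MeasurableSet s) (ht : MeasurableSet t) (h : Disjoint (Φ '' s) (Φ '' t)) :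
    MeasurablySeparable (Φ '' s) (Φ '' t) := by
  have := hψ.measurableSet_range.standardBorel
  have analytic : ∀ u, MeasurableSet u → AnalyticSet (Φ '' u) := fun u hu => by
    have := (hψ.equivRange.measurableSet_image.2 hu).analyticSet_image
      (hΦ.comp hψ.equivRange.symm.measurable)
    simpa [image_image] using this
  exact (analytic s hs).measurablySeparable (analytic t ht) h

attribute [local instance] cylAlgebra

lemma measurableSet_cyl {n : ℕ} (hn : 0 < n) (C : FinCauset n) : MeasurableSet (cyl C) :=
  measurableSet_generateFrom ⟨n, hn, C, rfl⟩

namespace Causet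

@[fun_prop]
lemma measurable_rel (a b : ℕ) : Measurable fun X : Causet => X.rel a b := by
  set n := max a b + 1
  have : (fun X : Causet => X.rel a b) = fun X => ∃ C : FinCauset n, C.rel a b ∧ X ∈ cyl C := by
    funext X
    refine propext ⟨fun h => ⟨X.restrict n, ⟨by omega, by omega, h⟩, X.mem_cyl_restrict n⟩, ?_⟩
    rintro ⟨C, hC, hX⟩
    exact (hX a b (by omega) (by omega)).2 hC
  rw [this]
  exact Measurable.exists fun C => measurable_const.and (measurableSet_cyl (by omega) C).mem

lemma measurableSet_Binf : MeasurableSet Binf := by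
  have : Binf = {X | ∀ n, ∃ k, n < k ∧ X.IsBreakLevel k} := by
    ext X
    rw [mem_Binf_iff]
    exact ⟨fun h n => (h.exists_gt n).imp fun k hk => ⟨hk.2, hk.1⟩,
      fun h => Set.infinite_of_forall_exists_gt fun n => (h n).imp fun k hk => ⟨hk.2, hk.1⟩⟩
  rw [this]
  unfold IsBreakLevel
  exact Measurable.setOf (by fun_prop)

open Classical in
noncomputable def relCode (X : Causet) : ℕ × ℕ → Bool := fun p => decide (X.rel p.1 p.2)

lemma measurable_relCode : Measurable relCode :=
  measurable_pi_iff.2 fun p => measurable_to_bool <| by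
    simpa only [relCode, Set.preimage, mem_singleton_iff, decide_eq_true_eq] using
      (measurable_rel p.1 p.2).setOf

lemma measurableEmbedding_relCode : MeasurableEmbedding relCode := by
  refine MeasurableEmbedding.iff_comap_eq.2 ⟨fun X Y h => ext_rel fun x y => ?_,
    measurable_relCode.comap_le.antisymm (MeasurableSpace.generateFrom_le ?_), ?_⟩
  · simpa [relCode] using congrFun h (x, y)
  · rintro _ ⟨n, -, C, rfl⟩
    refine ⟨{t | ∀ x y, x < n → y < n → (t (x, y) = true ↔ C.rel x y)},
      Measurable.setOf (by fun_prop), ?_⟩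
    ext X
    simp [relCode, cyl]
  · have : range relCode = {t | (∀ x, ¬ t (x, x) = true) ∧
        (∀ x y z, t (x, y) = true → t (y, z) = true → t (x, z) = true) ∧
        ∀ x y, t (x, y) = true → x < y} := by
      ext t
      constructor
      · rintro ⟨X, rfl⟩
        exact ⟨fun x => by simpa [relCode] using X.irrefl x,
          fun x y z => by simpa [relCode] using X.trans x y z,
          fun x y => by simpa [relCode] using X.lt_of_rel x y⟩
      · rintro ⟨h₁, h₂, h₃⟩
        exact ⟨⟨fun x y => t (x, y), h₁, h₂, h₃⟩, funext fun p => by simp [relCode]⟩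
    rw [this]
    exact Measurable.setOf (by fun_prop)

end Causet

lemma measurableSet_stemSet {n : ℕ} (C : FinCauset n) : MeasurableSet (stemSet C) := by
  have : stemSet C = {X | ∃ A : Finset ℕ, (∀ x y, y ∈ A → X.rel x y → x ∈ A) ∧
      ∃ f : {x // x < n} ≃ (A : Set ℕ), ∀ x y, C.rel x.1 y.1 ↔ X.rel (f x) (f y)} := by
    ext X
    constructor
    · rintro ⟨A, ⟨hA, hdown⟩, f, hf⟩
      lift A to Finset ℕ using hA
      exact ⟨A, hdown, f, hf⟩
    · rintro ⟨A, hdown, f, hf⟩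
      exact ⟨A, ⟨A.finite_toSet, hdown⟩, f, hf⟩
  rw [this]
  exact Measurable.setOf (by fun_prop)

abbrev PrincipalFinCauset : Type := {C : Σ n, FinCauset n // Principal C.2}

namespace Causet

open Classical in
noncomputable def principalStems (X : Causet) : PrincipalFinCauset → Bool :=
  fun C => decide (X ∈ stemSet C.1.2)

lemma measurable_principalStems (m : MeasurableSpace Causet)
    (h : ∀ n (C : FinCauset n), Principal C → MeasurableSet[m] (stemSet C)) :
    Measurable[m] principalStems :=
  measurable_pi_iff.2 fun C => measurable_to_bool <| by
    simpa only [principalStems, Set.preimage, mem_singleton_iff, decide_eq_true_eq,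
      ofPred_mem_eq] using h _ C.1.2 C.2

lemma iso_of_principalStems_eq {X Y : Causet} (hX : X ∈ Binf) (hY : Y ∈ Binf)
    (h : X.principalStems = Y.principalStems) : Iso X Y :=
  iso_of_principal_stems hX hY fun n C hC => (decide_eq_decide.1 (congrFun h ⟨⟨n, C⟩, hC⟩)).2

end Causet

/-- For every covariant event E ∈ R there is E' ∈ R(Ŝ) with
E △ E' ⊆ B_∞ᶜ. -/
theorem stmt_11 (E : Set Causet) (hE : MemR E) :
    ∃ E' : Set Causet, MeasurableSet[principalStemAlgebra] E' ∧
      symmDiff E E' ⊆ Binfᶜ := by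
  obtain ⟨hEm, hEcov⟩ := hE
  obtain ⟨u, hsub, hdisj, hu⟩ := Causet.measurableEmbedding_relCode.measurablySeparable_image
    (Causet.measurable_principalStems cylAlgebra fun n C _ => measurableSet_stemSet C)
    (hEm.inter Causet.measurableSet_Binf) (Causet.measurableSet_Binf.diff hEm) <| by
      refine Set.disjoint_left.2 ?_
      rintro _ ⟨X, ⟨hXE, hX⟩, rfl⟩ ⟨Y, ⟨hY, hYE⟩, hXY⟩
      exact hYE (hEcov X Y (Causet.iso_of_principalStems_eq hX hY hXY.symm) hXE)
  refine ⟨Causet.principalStems ⁻¹' u, Causet.measurable_principalStems principalStemAlgebra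
    (fun n C hC => measurableSet_generateFrom ⟨n, C, hC, rfl⟩) hu, ?_⟩
  intro X hXE' hX
  rcases Set.mem_symmDiff.1 hXE' with ⟨hXE, hXu⟩ | ⟨hXu, hXE⟩
  · exact hXu (hsub ⟨X, ⟨hXE, hX⟩, rfl⟩)
  · exact hdisj.ne_of_mem ⟨X, ⟨hX, hXE⟩, rfl⟩ hXu rfl
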